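/- Let M ⊆ S_k^n be a simple (⊓,⊔)-closed set. Then the differential x̄ of every join-irreducible element x of M has at least one nonzero component, and the map x ↦ x̄ is injective on the set J(M) of join-irreducible elements of M. -/
import Mathlib


/-- The partial order on `S_k = {0,1,…,k}`: `a ⪯ b` iff `a = 0` or `a = b`. -/
def pre {k : ℕ} (a b : Fin (k + 1)) : Prop := a = 0 ∨ a = b

instance {k : ℕ} (a b : Fin (k + 1)) : Decidable (pre a b) :=
  decidable_of_iff (a = 0 ∨ a = b) Iff.rfl

/-- The componentwise order `⪯` on `S_k^n`. -/
def preV {k n : ℕ} (x y : Fin n → Fin (k + 1)) : Prop := ∀ i, pre (x i) (y i)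

/-- The operation `⊓` on `S_k^n`. -/
def sqcap {k n : ℕ} (x y : Fin n → Fin (k + 1)) : Fin n → Fin (k + 1) :=
  fun i => if pre (x i) (y i) ∨ pre (y i) (x i) then min (x i) (y i) else 0

/-- The operation `⊔` on `S_k^n`. -/
def sqcup {k n : ℕ} (x y : Fin n → Fin (k + 1)) : Fin n → Fin (k + 1) :=
  fun i => if pre (x i) (y i) ∨ pre (y i) (x i) then max (x i) (y i) else 0

/-- A `(⊓,⊔)`-closed subset of `S_k^n`. -/
def closedSet {k n : ℕ} (M : Set (Fin n → Fin (k + 1))) : Prop :=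
  M.Nonempty ∧ ∀ x ∈ M, ∀ y ∈ M, sqcap x y ∈ M ∧ sqcup x y ∈ M

/-- Strict version of `⪯`. -/
def strictPreV {k n : ℕ} (x y : Fin n → Fin (k + 1)) : Prop := preV x y ∧ x ≠ y

/-- `m` is the minimum element of `M` with respect to `⪯`. -/
def isMinOf {k n : ℕ} (M : Set (Fin n → Fin (k + 1))) (m : Fin n → Fin (k + 1)) : Prop :=
  m ∈ M ∧ ∀ x ∈ M, preV m x

/-- `u` is the least upper bound of `S` inside `(M, ⪯)`. -/
def isLUBof {k n : ℕ} (M S : Set (Fin n → Fin (k + 1))) (u : Fin n → Fin (k + 1)) : Prop :=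
  u ∈ M ∧ (∀ s ∈ S, preV s u) ∧ ∀ w ∈ M, (∀ s ∈ S, preV s w) → preV u w

/-- `x` is a join-irreducible element of `M`. -/
def joinIrr {k n : ℕ} (M : Set (Fin n → Fin (k + 1))) (x : Fin n → Fin (k + 1)) : Prop :=
  x ∈ M ∧ ¬ isMinOf M x ∧ ¬ isLUBof M {y | y ∈ M ∧ strictPreV y x} x

/-- A `(⊓,⊔)`-closed set is simple if its minimum element is the all-zero vector. -/
def simpleSet {k n : ℕ} (M : Set (Fin n → Fin (k + 1))) : Prop :=
  isMinOf M (fun _ => 0)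

/-- `y` is a lower cover of `x` in `M`. -/
def lowerCover {k n : ℕ} (M : Set (Fin n → Fin (k + 1)))
    (y x : Fin n → Fin (k + 1)) : Prop :=
  y ∈ M ∧ strictPreV y x ∧ ¬ ∃ z ∈ M, strictPreV y z ∧ strictPreV z x

/-- `d` is the differential of `x` in `M` (with respect to some lower cover of `x`). -/
def isDiff {k n : ℕ} (M : Set (Fin n → Fin (k + 1)))
    (x d : Fin n → Fin (k + 1)) : Prop :=
  ∃ y, lowerCover M y x ∧ ∀ i, d i = if x i ≠ 0 ∧ y i = 0 then x i else 0

/-- The support of `x ∈ S_k^n`. -/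
def supp {k n : ℕ} (x : Fin n → Fin (k + 1)) : Set (Fin n) := {i | x i ≠ 0}

/-- `x ⌣ y`: `x` and `y` have no common upper bound in `S_k^n`. -/
def incons {k n : ℕ} (x y : Fin n → Fin (k + 1)) : Prop :=
  ∃ i, x i ≠ 0 ∧ y i ≠ 0 ∧ x i ≠ y i


lemma pre_antisymm {k : ℕ} {a b : Fin (k + 1)} (h1 : pre a b) (h2 : pre b a) : a = b := by
  rcases h1 with h | h <;> rcases h2 with g | g <;> simp_all

lemma preV_antisymm {k n : ℕ} {x y : Fin n → Fin (k + 1)} (h1 : preV x y) (h2 : preV y x) :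
    x = y := funext fun i => pre_antisymm (h1 i) (h2 i)

lemma sqcap_preV_left {k n : ℕ} (x w : Fin n → Fin (k + 1)) : preV (sqcap x w) x := by
  intro i
  unfold sqcap
  split
  · rename_i h
    rcases h with (h | h) | (h | h)
    · left; simp [h]
    · right; simp [h]
    · left; simp [h]
    · right; simp [h]
  · left; rfl

lemma preV_sqcap {k n : ℕ} {s x w : Fin n → Fin (k + 1)} (h1 : preV s x) (h2 : preV s w) :
    preV s (sqcap x w) := by
  intro i
  rcases h1 i with h | h
  · left; exact h
  · rcases h2 i with g | g
    · left; exact g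
    · right
      unfold sqcap
      have hx : x i = w i := by rw [← h, ← g]
      have hc : pre (x i) (w i) ∨ pre (w i) (x i) := Or.inl (Or.inr hx)
      rw [if_pos hc, ← hx, ← h, min_self]

lemma sqcap_eq_left {k n : ℕ} {x w : Fin n → Fin (k + 1)} (h : sqcap x w = x) : preV x w := by
  intro i
  by_cases hx : x i = 0
  · left; exact hx
  · right
    have hi : sqcap x w i = x i := congrFun h i
    unfold sqcap at hi
    split at hi
    · rename_i hc
      rcases hc with (hc | hc) | (hc | hc)
      · exact absurd hc hx
      · exact hc
      · rw [hc] at hi; simp at hi; exact absurd hi.symm hx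
      · exact hc.symm
    · exact absurd hi.symm hx

/-- Every strict lower element of a join-irreducible `x` lies below its lower cover `y`. -/
lemma strict_below_cover {k n : ℕ} {M : Set (Fin n → Fin (k + 1))} {x y : Fin n → Fin (k + 1)}
    (hM : closedSet M) (hx : joinIrr M x) (hy : lowerCover M y x) :
    ∀ w ∈ M, strictPreV w x → preV w y := by
  obtain ⟨hxM, hmin, hlub⟩ := hx
  have hw0 : ∃ w0 ∈ M, (∀ s ∈ {z | z ∈ M ∧ strictPreV z x}, preV s w0) ∧ ¬ preV x w0 := by
    by_contra h
    push_neg at h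
    exact hlub ⟨hxM, fun s hs => hs.2.1, fun w hw hub => h w hw hub⟩
  obtain ⟨w0, hw0M, hub, hnle⟩ := hw0
  set u := sqcap x w0 with hu
  have huM : u ∈ M := (hM.2 x hxM w0 hw0M).1
  have hux : preV u x := sqcap_preV_left x w0
  have hune : u ≠ x := fun h => hnle (sqcap_eq_left h)
  have husx : strictPreV u x := ⟨hux, hune⟩
  have hyu : preV y u := preV_sqcap hy.2.1.1 (hub y ⟨hy.1, hy.2.1⟩)
  have hyeq : y = u := by
    by_contra hne
    exact hy.2.2 ⟨u, huM, ⟨hyu, hne⟩, husx⟩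
  intro w hwM hwx
  rw [hyeq]
  exact preV_sqcap hwx.1 (hub w ⟨hwM, hwx⟩)

lemma diff_has_nonzero {k n : ℕ} {M : Set (Fin n → Fin (k + 1))} {x d : Fin n → Fin (k + 1)}
    (hd : isDiff M x d) : ∃ i, d i ≠ 0 := by
  obtain ⟨y, hy, hdef⟩ := hd
  obtain ⟨hpre, hne⟩ := hy.2.1
  have : ∃ i, y i ≠ x i := by
    by_contra h
    push_neg at h
    exact hne (funext h)
  obtain ⟨i, hi⟩ := this
  have hy0 : y i = 0 := (hpre i).resolve_right hi
  have hx0 : x i ≠ 0 := fun h => hi (by rw [hy0, h])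
  refine ⟨i, ?_⟩
  rw [hdef i, if_pos ⟨hx0, hy0⟩]
  exact hx0

/-- Lemma 5(4)&(5): the differential of every join-irreducible element has a
nonzero component, and the map `x ↦ x̄` is injective on `J(M)`. -/
theorem diff_nonzero_and_injective (k n : ℕ) (hk : 0 < k) (hn : 0 < n)
    (M : Set (Fin n → Fin (k + 1))) (hM : closedSet M) (hs : simpleSet M) :
    (∀ x d, joinIrr M x → isDiff M x d → ∃ i, d i ≠ 0) ∧
    (∀ x x' d d', joinIrr M x → joinIrr M x' →
      isDiff M x d → isDiff M x' d' → d = d' → x = x') := by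
  constructor
  · intro x d _ hd
    exact diff_has_nonzero hd
  · intro x x' d d' hx hx' hd hd' hdd
    obtain ⟨i0, hi0⟩ := diff_has_nonzero hd
    obtain ⟨y, hy, hdef⟩ := hd
    obtain ⟨y', hy', hdef'⟩ := hd'
    have hcond : x i0 ≠ 0 ∧ y i0 = 0 := by
      by_contra h
      exact hi0 (by rw [hdef i0, if_neg h])
    have hdx : d i0 = x i0 := by rw [hdef i0, if_pos hcond]
    have hcond' : x' i0 ≠ 0 ∧ y' i0 = 0 := by
      by_contra h
      rw [hdd] at hi0
      exact hi0 (by rw [hdef' i0, if_neg h])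
    have hdx' : d i0 = x' i0 := by rw [hdd, hdef' i0, if_pos hcond']
    have hxx' : x i0 = x' i0 := by rw [← hdx, hdx']
    -- x ⊓ x' equals x
    have key : ∀ (a b : Fin n → Fin (k + 1)) (ya : Fin n → Fin (k + 1)),
        joinIrr M a → lowerCover M ya a → b ∈ M → a i0 = b i0 → a i0 ≠ 0 → ya i0 = 0 →
        preV a b := by
      intro a b ya ha hya hbM hab ha0 hya0
      have hzM : sqcap a b ∈ M := (hM.2 a ha.1 b hbM).1
      have hza : preV (sqcap a b) a := sqcap_preV_left a b
      by_cases hz : sqcap a b = a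
      · exact sqcap_eq_left hz
      · exfalso
        have hzy : preV (sqcap a b) ya := strict_below_cover hM ha hya _ hzM ⟨hza, hz⟩
        have hzi : sqcap a b i0 = a i0 := by
          unfold sqcap
          have hc : pre (a i0) (b i0) ∨ pre (b i0) (a i0) := Or.inl (Or.inr hab)
          rw [if_pos hc, hab, min_self]
        rcases hzy i0 with h | h
        · rw [hzi] at h; exact ha0 h
        · rw [hzi, hya0] at h; exact ha0 h
    have h1 : preV x x' := key x x' y ⟨hx.1, hx.2.1, hx.2.2⟩ hy hx'.1 hxx' hcond.1 hcond.2
    have h2 : preV x' x := key x' x y' ⟨hx'.1, hx'.2.1, hx'.2.2⟩ hy' hx.1 hxx'.symm hcond'.1 hcond'.2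
    exact preV_antisymm h1 h2
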